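/- arXiv:1405.2295 — 7 statements merged into one kernel-verified Lean document; each statement's English description precedes it below -/
import Mathlib

section
/- Let P > 0, g > 0, I_b > 0, and let K be a natural number. For each k ∈ {1, …, K} let I_k : {0,1}^k → ℝ be a nonnegative function, and define the averages Ī_k = 2^{-k} · Σ_{v ∈ {0,1}^k} I_k(v). Then (1/2^K) · Σ_{(u_1,…,u_K) ∈ {0,1}^K} log(1 + P·g / (I_b + Σ_{k=1}^K I_k(u_1,…,u_k))) ≥ log(1 + P·g / (I_b + Σ_{k=1}^K Ī_k)). (This is the key inequality of Lemma 3: the time-shared rate over a slot with piecewise-constant interference is lower bounded by the rate computed with the time-averaged interference of each cluster class.) -/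
/-!
The rate `y ↦ log (1 + P g / y)` is convex on `(0, ∞)`, so by Jensen the average rate over all
strings `u` is at least the rate at the average total interference `I_b + 𝔼_u ∑_k I_k(u₁,…,u_k)`.
Since `I_k` only sees the first `k` bits, its average over `{0,1}^K` is its average `Ī_k`
over `{0,1}^k`.
-/

open Finset Real

theorem Fintype.sum_comp_castLE {α M : Type*} [Fintype α] [AddCommMonoid M] {m n : ℕ}
    (h : m ≤ n) (F : (Fin m → α) → M) :
    ∑ u : Fin n → α, F (fun i => u (Fin.castLE h i)) =
      Fintype.card α ^ (n - m) • ∑ v : Fin m → α, F v := by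
  obtain ⟨k, rfl⟩ := Nat.exists_eq_add_of_le h
  rw [← (Fin.appendEquiv m k).sum_comp, Fintype.sum_prod_type]
  simp [Fin.append_left', Finset.smul_sum]

theorem Fintype.average_comp_castLE {α : Type*} [Fintype α] [Nonempty α] {m n : ℕ}
    (h : m ≤ n) (F : (Fin m → α) → ℝ) :
    1 / (Fintype.card α : ℝ) ^ n * ∑ u : Fin n → α, F (fun i => u (Fin.castLE h i)) =
      1 / (Fintype.card α : ℝ) ^ m * ∑ v : Fin m → α, F v := by
  have hcard : (Fintype.card α : ℝ) ^ n = Fintype.card α ^ (n - m) * Fintype.card α ^ m := by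
    rw [← pow_add, Nat.sub_add_cancel h]
  rw [Fintype.sum_comp_castLE h, nsmul_eq_mul, hcard]
  field_simp
  push_cast
  ring

theorem convexOn_log_one_add_div {c : ℝ} (hc : 0 ≤ c) :
    ConvexOn ℝ (Set.Ioi 0) fun y => log (1 + c / y) := by
  have hlog : Set.EqOn (fun y => log (y + c) - log y) (fun y => log (1 + c / y)) (Set.Ioi 0) := by
    intro y (hy : 0 < y)
    have hyc : 0 < y + c := by linarith
    dsimp only
    rw [← log_div hyc.ne' hy.ne', add_div, div_self hy.ne', add_comm]
  refine ConvexOn.congr ?_ hlog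
  refine convexOn_of_hasDerivWithinAt2_nonneg (convex_Ioi 0)
    (f' := fun y => (y + c)⁻¹ - y⁻¹) (f'' := fun y => (y ^ 2)⁻¹ - ((y + c) ^ 2)⁻¹) ?_ ?_ ?_ ?_
  · intro y (hy : 0 < y)
    fun_prop (disch := positivity)
  all_goals
    rw [interior_Ioi]
    intro y (hy : 0 < y)
    have hyc : 0 < y + c := by linarith
  · have d := ((hasDerivAt_log hyc.ne').comp_add_const y c).sub (hasDerivAt_log hy.ne')
    exact d.hasDerivWithinAt
  · have d := ((hasDerivAt_inv hyc.ne').comp_add_const y c).sub (hasDerivAt_inv hy.ne')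
    rw [neg_sub_neg] at d
    exact d.hasDerivWithinAt
  · rw [sub_nonneg]
    gcongr
    linarith

/-- Key inequality of Lemma 3 (achievable rate with time-varying interference).
Let `P, g, I_b > 0` and `K : ℕ`.  For each `k ∈ {1, …, K}` (encoded as `k+1` for
`k : Fin K`), let `I (k+1) : ({0,1}^(k+1)) → ℝ` be a nonnegative function, and let
`Ī_k = 2^{-(k+1)} ∑_{v} I (k+1) v` be its average.  Then the average over all
binary strings `u ∈ {0,1}^K` of `log (1 + P g / (I_b + ∑_k I (k+1) (u₁,…,u_{k+1})))`
is at least `log (1 + P g / (I_b + ∑_k Ī_k))`. -/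
theorem timeshare_rate_ge_avg_interference_rate
    (P g Ib : ℝ) (hP : 0 < P) (hg : 0 < g) (hIb : 0 < Ib)
    (K : ℕ) (I : (k : ℕ) → (Fin k → Bool) → ℝ)
    (hI : ∀ k, 1 ≤ k → k ≤ K → ∀ v : Fin k → Bool, 0 ≤ I k v) :
    (1 / 2 ^ K) *
        ∑ u : Fin K → Bool,
          Real.log (1 + P * g /
            (Ib + ∑ k : Fin K, I (k.1 + 1) (fun i : Fin (k.1 + 1) => u (Fin.castLE k.isLt i))))
      ≥ Real.log (1 + P * g /
          (Ib + ∑ k : Fin K, (1 / 2 ^ (k.1 + 1)) * ∑ v : Fin (k.1 + 1) → Bool, I (k.1 + 1) v)) := by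
  set S : (Fin K → Bool) → ℝ := fun u =>
    ∑ k : Fin K, I (k.1 + 1) (fun i : Fin (k.1 + 1) => u (Fin.castLE k.isLt i)) with hS_def
  have hS_nonneg (u) : 0 ≤ S u := sum_nonneg fun k _ => hI _ (by omega) k.isLt _
  have hS_avg : 1 / 2 ^ K * ∑ u, S u =
      ∑ k : Fin K, 1 / 2 ^ (k.1 + 1) * ∑ v : Fin (k.1 + 1) → Bool, I (k.1 + 1) v := by
    rw [hS_def, sum_comm, mul_sum]
    exact sum_congr rfl fun k _ => by simpa using Fintype.average_comp_castLE k.isLt (I (k.1 + 1))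
  have hw : ∑ _u : Fin K → Bool, (1 / 2 ^ K : ℝ) = 1 := by simp
  have hmean : ∑ u, (1 / 2 ^ K : ℝ) • (Ib + S u) = Ib + 1 / 2 ^ K * ∑ u, S u := by
    simp only [smul_eq_mul, mul_add, sum_add_distrib, ← sum_mul, hw, one_mul, ← mul_sum]
  have jensen := (convexOn_log_one_add_div (mul_pos hP hg).le).map_sum_le (t := univ)
    (fun _ _ => by positivity) hw (p := fun u => Ib + S u)
    (fun u _ => show 0 < Ib + S u by linarith [hS_nonneg u])
  rw [hmean, hS_avg] at jensen
  simpa only [smul_eq_mul, ← mul_sum] using jensen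
end

section
/- Let μ > 0, let L and M be positive integers, and let p_A and p_V be probability mass functions on {1, …, L}. On a probability space, let N be a Poisson random variable with mean μ, let (A_{i,j})_{i ∈ ℕ, 1 ≤ j ≤ M} be an i.i.d. family of {1,…,L}-valued random variables with common law p_A, and let V be a {1,…,L}-valued random variable with law p_V, with N, (A_{i,j}) and V mutually independent. Then the probability of a match, p_M = P(∃ i < N, ∃ j ∈ {1,…,M} : A_{i,j} = V), equals 1 − Σ_{v=1}^{L} p_V(v) · exp(−μ·(1 − (1 − p_A(v))^M)). -/
open MeasureTheory ProbabilityTheory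

/-!
Pass to the complement and condition on `N = n` and `V = v`. Then "no match" says that the
`n * M` independent draws `A i j` with `i < n` all miss `v`, which has probability
`(1 - pA v) ^ (n * M)`. Averaging over `n` evaluates the generating function of the Poisson law,
`E[s ^ N] = exp (-μ (1 - s))`, at `s = (1 - pA v) ^ M`; averaging over `v` gives
`P(no match) = ∑ v, pV v * exp (-μ (1 - (1 - pA v) ^ M))`.
-/

lemma hasSum_poisson_mul_pow (μ q : ℝ) :
    HasSum (fun n : ℕ => Real.exp (-μ) * μ ^ n / n.factorial * q ^ n)
      (Real.exp (-μ * (1 - q))) := by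
  have h := (NormedSpace.expSeries_div_hasSum_exp (μ * q)).mul_left (Real.exp (-μ))
  rw [← Real.exp_eq_exp_ℝ, ← Real.exp_add] at h
  have hterm : (fun n : ℕ => Real.exp (-μ) * μ ^ n / n.factorial * q ^ n)
      = fun n => Real.exp (-μ) * ((μ * q) ^ n / n.factorial) := by
    funext n; rw [mul_pow]; ring
  rwa [hterm, show -μ * (1 - q) = -μ + μ * q by ring]

lemma measure_eq_tsum_inter_preimage_singleton {Ω α : Type*} [MeasurableSpace Ω]
    [MeasurableSpace α] [Countable α] [MeasurableSingletonClass α] (P : Measure Ω)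
    {f : Ω → α} (hf : Measurable f) (s : Set Ω) :
    P s = ∑' a, P (s ∩ f ⁻¹' {a}) := by
  have hcover : (⋃ a, f ⁻¹' {a}) = Set.univ := by
    ext ω; simp
  calc P s = P.restrict s (⋃ a, f ⁻¹' {a}) := by rw [hcover, Measure.restrict_apply_univ]
    _ = ∑' a, P (s ∩ f ⁻¹' {a}) := by
      rw [measure_iUnion (fun a b hab => Set.disjoint_iff.2 fun ω h => hab (h.1.symm.trans h.2))
        (fun a => hf (measurableSet_singleton a))]
      simp only [Measure.restrict_apply (hf (measurableSet_singleton _)), Set.inter_comm]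

section Cluster

variable {Ω : Type*} {L M : ℕ}

def matchEvent (N : Ω → ℕ) (A : ℕ → Fin M → Ω → Fin L) (V : Ω → Fin L) : Set Ω :=
  {ω | ∃ i < N ω, ∃ j, A i j ω = V ω}

def clusterFamily (N : Ω → ℕ) (A : ℕ → Fin M → Ω → Fin L) (V : Ω → Fin L) :
    Unit ⊕ Unit ⊕ ℕ × Fin M → Ω → ℕ :=
  Sum.elim (fun _ => N) (Sum.elim (fun _ ω => (V ω : ℕ)) (fun q ω => (A q.1 q.2 ω : ℕ)))

variable {N : Ω → ℕ} {A : ℕ → Fin M → Ω → Fin L} {V : Ω → Fin L}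

lemma compl_matchEvent_inter_preimage_singleton (n : ℕ) (v : Fin L) :
    (matchEvent N A V)ᶜ ∩ N ⁻¹' {n} ∩ V ⁻¹' {v}
      = N ⁻¹' {n} ∩
        (V ⁻¹' {v} ∩ ⋂ q ∈ Finset.range n ×ˢ Finset.univ, A q.1 q.2 ⁻¹' {v}ᶜ) := by
  ext ω
  simp only [matchEvent, Set.mem_inter_iff, Set.mem_compl_iff, Set.mem_ofPred_eq,
    Set.mem_preimage, Set.mem_singleton_iff, Set.mem_iInter, Finset.mem_product,
    Finset.mem_range, Finset.mem_univ, and_true, Prod.forall, not_exists, not_and]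
  constructor
  · rintro ⟨⟨hmiss, rfl⟩, rfl⟩
    exact ⟨rfl, rfl, fun i j hi => hmiss i hi j⟩
  · rintro ⟨rfl, rfl, hmiss⟩
    exact ⟨⟨fun i hi j => hmiss i j hi, rfl⟩, rfl⟩

variable [MeasurableSpace Ω]

lemma measurableSet_matchEvent (hNmeas : Measurable N) (hAmeas : ∀ i j, Measurable (A i j))
    (hVmeas : Measurable V) : MeasurableSet (matchEvent N A V) := by
  unfold matchEvent
  measurability

variable {Pr : Measure Ω}

lemma measure_preimage_inter_eq_mul_prod
    (hindep : iIndepFun (clusterFamily N A V) Pr)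
    (s : Set ℕ) (t : Set (Fin L)) (T : Finset (ℕ × Fin M)) (u : Set (Fin L)) :
    Pr (N ⁻¹' s ∩ (V ⁻¹' t ∩ ⋂ q ∈ T, A q.1 q.2 ⁻¹' u))
      = Pr (N ⁻¹' s) * (Pr (V ⁻¹' t) * ∏ q ∈ T, Pr (A q.1 q.2 ⁻¹' u)) := by
  classical
  have key := hindep.measure_inter_preimage_eq_mul
    (insert (Sum.inl ()) (insert (Sum.inr (Sum.inl ())) (T.image (Sum.inr ∘ Sum.inr))))
    (sets := Sum.elim (fun _ => s) (Sum.elim (fun _ => Fin.val '' t) (fun _ => Fin.val '' u)))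
    (fun _ _ => trivial)
  have hval (X : Ω → Fin L) (t : Set (Fin L)) :
      (fun ω => ((X ω : Fin L) : ℕ)) ⁻¹' (Fin.val '' t) = X ⁻¹' t := by
    change (Fin.val ∘ X) ⁻¹' _ = _
    rw [Set.preimage_comp, Set.preimage_image_eq _ Fin.val_injective]
  rw [Finset.set_biInter_insert, Finset.set_biInter_insert, Finset.set_biInter_finset_image,
    Finset.prod_insert (by simp), Finset.prod_insert (by simp),
    Finset.prod_image (Sum.inr_injective.comp Sum.inr_injective).injOn] at key
  simpa only [clusterFamily, Function.comp_apply, Sum.elim_inl, Sum.elim_inr, hval] using key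

variable [IsProbabilityMeasure Pr]

lemma measure_compl_matchEvent_inter_preimage_singleton {μ : ℝ} {pA pV : Fin L → ℝ}
    (hpA0 : ∀ w, 0 ≤ pA w) (hAmeas : ∀ i j, Measurable (A i j))
    (hNdist : ∀ n : ℕ, Pr {ω | N ω = n}
      = ENNReal.ofReal (Real.exp (-μ) * μ ^ n / n.factorial))
    (hAdist : ∀ i j w, Pr {ω | A i j ω = w} = ENNReal.ofReal (pA w))
    (hVdist : ∀ w, Pr {ω | V ω = w} = ENNReal.ofReal (pV w))
    (hindep : iIndepFun (clusterFamily N A V) Pr)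
    (n : ℕ) (v : Fin L) :
    Pr ((matchEvent N A V)ᶜ ∩ N ⁻¹' {n} ∩ V ⁻¹' {v})
      = ENNReal.ofReal (Real.exp (-μ) * μ ^ n / n.factorial)
        * (ENNReal.ofReal (pV v) * ENNReal.ofReal (1 - pA v) ^ (n * M)) := by
  have hmiss (i : ℕ) (j : Fin M) : Pr (A i j ⁻¹' {v}ᶜ) = ENNReal.ofReal (1 - pA v) := by
    have hhit : Pr (A i j ⁻¹' {v}) = ENNReal.ofReal (pA v) := hAdist i j v
    rw [Set.preimage_compl, prob_compl_eq_one_sub (hAmeas i j (measurableSet_singleton v)), hhit,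
      ← ENNReal.ofReal_one, ← ENNReal.ofReal_sub _ (hpA0 v)]
  rw [compl_matchEvent_inter_preimage_singleton, measure_preimage_inter_eq_mul_prod hindep]
  simp only [hmiss, Finset.prod_const, Finset.card_product, Finset.card_range, Finset.card_univ,
    Fintype.card_fin]
  exact congrArg₂ _ (hNdist n) (congrArg₂ _ (hVdist v) rfl)

lemma measure_compl_matchEvent {μ : ℝ} (hμ : 0 ≤ μ) {pA pV : Fin L → ℝ}
    (hpA0 : ∀ w, 0 ≤ pA w) (hpA_le_one : ∀ w, pA w ≤ 1) (hpV0 : ∀ w, 0 ≤ pV w)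
    (hNmeas : Measurable N) (hAmeas : ∀ i j, Measurable (A i j)) (hVmeas : Measurable V)
    (hNdist : ∀ n : ℕ, Pr {ω | N ω = n}
      = ENNReal.ofReal (Real.exp (-μ) * μ ^ n / n.factorial))
    (hAdist : ∀ i j w, Pr {ω | A i j ω = w} = ENNReal.ofReal (pA w))
    (hVdist : ∀ w, Pr {ω | V ω = w} = ENNReal.ofReal (pV w))
    (hindep : iIndepFun (clusterFamily N A V) Pr) :
    Pr (matchEvent N A V)ᶜ
      = ENNReal.ofReal (∑ v, pV v * Real.exp (-μ * (1 - (1 - pA v) ^ M))) := by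
  set q : Fin L → ℝ := fun v => (1 - pA v) ^ M
  have hq0 (v : Fin L) : 0 ≤ q v := pow_nonneg (sub_nonneg.2 (hpA_le_one v)) M
  have hterm0 (v : Fin L) (n : ℕ) :
      0 ≤ pV v * (Real.exp (-μ) * μ ^ n / n.factorial * q v ^ n) := by
    have := hq0 v; have := hpV0 v; positivity
  have hcell (n : ℕ) (v : Fin L) :
      Pr ((matchEvent N A V)ᶜ ∩ N ⁻¹' {n} ∩ V ⁻¹' {v})
        = ENNReal.ofReal (pV v * (Real.exp (-μ) * μ ^ n / n.factorial * q v ^ n)) := by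
    rw [measure_compl_matchEvent_inter_preimage_singleton hpA0 hAmeas hNdist hAdist hVdist hindep,
      ← ENNReal.ofReal_pow (sub_nonneg.2 (hpA_le_one v)), ← ENNReal.ofReal_mul (hpV0 v),
      ← ENNReal.ofReal_mul (by positivity)]
    congr 1
    rw [← pow_mul, mul_comm M n]
    ring
  calc Pr (matchEvent N A V)ᶜ
      = ∑' n, ∑' v, Pr ((matchEvent N A V)ᶜ ∩ N ⁻¹' {n} ∩ V ⁻¹' {v}) := by
        simp only [← measure_eq_tsum_inter_preimage_singleton Pr hVmeas,
          ← measure_eq_tsum_inter_preimage_singleton Pr hNmeas]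
    _ = ∑' v, ∑' n,
          ENNReal.ofReal (pV v * (Real.exp (-μ) * μ ^ n / n.factorial * q v ^ n)) := by
        simp only [hcell]; exact ENNReal.tsum_comm
    _ = ∑' v, ENNReal.ofReal (pV v * Real.exp (-μ * (1 - q v))) := by
        congr 1; funext v
        have hsum := (hasSum_poisson_mul_pow μ (q v)).mul_left (pV v)
        rw [← ENNReal.ofReal_tsum_of_nonneg (hterm0 v) hsum.summable, hsum.tsum_eq]
    _ = ENNReal.ofReal (∑ v, pV v * Real.exp (-μ * (1 - q v))) := by
        rw [tsum_fintype, ENNReal.ofReal_sum_of_nonneg fun v _ => by have := hpV0 v; positivity]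

end Cluster

theorem match_probability_formula_general
    {Ω : Type*} [MeasurableSpace Ω] (Pr : Measure Ω) [IsProbabilityMeasure Pr]
    (μ : ℝ) (hμ : 0 < μ) (L M : ℕ)
    (pA pV : Fin L → ℝ)
    (hpA0 : ∀ w, 0 ≤ pA w) (hpA1 : ∑ w, pA w = 1)
    (hpV0 : ∀ w, 0 ≤ pV w)
    (N : Ω → ℕ) (A : ℕ → Fin M → Ω → Fin L) (V : Ω → Fin L)
    (hNmeas : Measurable N) (hAmeas : ∀ i j, Measurable (A i j)) (hVmeas : Measurable V)
    (hNdist : ∀ n : ℕ, Pr {ω | N ω = n}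
      = ENNReal.ofReal (Real.exp (-μ) * μ ^ n / n.factorial))
    (hAdist : ∀ i j w, Pr {ω | A i j ω = w} = ENNReal.ofReal (pA w))
    (hVdist : ∀ w, Pr {ω | V ω = w} = ENNReal.ofReal (pV w))
    (hindep : iIndepFun
      (m := fun _ : Unit ⊕ Unit ⊕ ℕ × Fin M => (inferInstance : MeasurableSpace ℕ))
      (Sum.elim (fun _ => N)
        (Sum.elim (fun _ ω => ((V ω : Fin L) : ℕ))
          (fun q ω => ((A q.1 q.2 ω : Fin L) : ℕ)))) Pr) :
    Pr {ω | ∃ i < N ω, ∃ j : Fin M, A i j ω = V ω}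
      = ENNReal.ofReal (1 - ∑ v, pV v * Real.exp (-μ * (1 - (1 - pA v) ^ M))) := by
  have hpA_le_one (w : Fin L) : pA w ≤ 1 :=
    hpA1 ▸ Finset.single_le_sum (fun v _ => hpA0 v) (Finset.mem_univ w)
  change Pr (matchEvent N A V) = _
  rw [← compl_compl (matchEvent N A V),
    prob_compl_eq_one_sub (measurableSet_matchEvent hNmeas hAmeas hVmeas).compl,
    measure_compl_matchEvent hμ.le hpA0 hpA_le_one hpV0 hNmeas hAmeas hVmeas hNdist hAdist
      hVdist hindep, ← ENNReal.ofReal_one,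
    ← ENNReal.ofReal_sub _ (Finset.sum_nonneg fun v _ => by have := hpV0 v; positivity)]

/-- Match-probability formula of Lemma 2: if `N` is Poisson with mean `μ`,
`(A i j)` (`i ∈ ℕ`, `j ∈ Fin M`) is an i.i.d. family of videos drawn from the
caching pmf `pA` on the library `Fin L`, `V` is a requested video drawn from the
popularity pmf `pV`, and `N`, `(A i j)` and `V` are mutually independent, then
the probability of a match, `P(∃ i < N, ∃ j, A i j = V)`, equals
`1 − ∑ v, pV v · exp (−μ (1 − (1 − pA v)^M))`. -/
theorem match_probability_formula
    {Ω : Type*} [MeasurableSpace Ω] (Pr : Measure Ω) [IsProbabilityMeasure Pr]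
    (μ : ℝ) (hμ : 0 < μ) (L M : ℕ) (hL : 0 < L) (hM : 0 < M)
    (pA pV : Fin L → ℝ)
    (hpA0 : ∀ w, 0 ≤ pA w) (hpA1 : ∑ w, pA w = 1)
    (hpV0 : ∀ w, 0 ≤ pV w) (hpV1 : ∑ w, pV w = 1)
    (N : Ω → ℕ) (A : ℕ → Fin M → Ω → Fin L) (V : Ω → Fin L)
    (hNmeas : Measurable N) (hAmeas : ∀ i j, Measurable (A i j)) (hVmeas : Measurable V)
    (hNdist : ∀ n : ℕ, Pr {ω | N ω = n}
      = ENNReal.ofReal (Real.exp (-μ) * μ ^ n / n.factorial))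
    (hAdist : ∀ i j w, Pr {ω | A i j ω = w} = ENNReal.ofReal (pA w))
    (hVdist : ∀ w, Pr {ω | V ω = w} = ENNReal.ofReal (pV w))
    (hindep : iIndepFun
      (m := fun _ : Unit ⊕ Unit ⊕ ℕ × Fin M => (inferInstance : MeasurableSpace ℕ))
      (Sum.elim (fun _ => N)
        (Sum.elim (fun _ ω => ((V ω : Fin L) : ℕ))
          (fun q ω => ((A q.1 q.2 ω : Fin L) : ℕ)))) Pr) :
    Pr {ω | ∃ i < N ω, ∃ j : Fin M, A i j ω = V ω}
      = ENNReal.ofReal (1 - ∑ v, pV v * Real.exp (-μ * (1 - (1 - pA v) ^ M))) :=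
  match_probability_formula_general Pr μ hμ L M pA pV hpA0 hpA1 hpV0 N A V hNmeas hAmeas hVmeas
    hNdist hAdist hVdist hindep
end

section
/- For all real numbers λ > 0, R_c > 0, δ ≥ 2·R_c, and p ∈ [0, 1], one has ((1 − exp(−λ·π·δ²)) / (π·δ²)) · π·R_c² · p ≤ 1/4. -/
open Real

noncomputable def maternIntensity (lam δ : ℝ) : ℝ :=
  (1 - exp (-(lam * π * δ ^ 2))) / (π * δ ^ 2)

lemma maternIntensity_nonneg {lam : ℝ} (hlam : 0 ≤ lam) (δ : ℝ) : 0 ≤ maternIntensity lam δ :=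
  div_nonneg (sub_nonneg.2 (exp_le_one_iff.2 (neg_nonpos.2 (by positivity)))) (by positivity)

lemma maternIntensity_le_inv (lam δ : ℝ) : maternIntensity lam δ ≤ (π * δ ^ 2)⁻¹ := by
  rw [maternIntensity, div_eq_mul_inv]
  exact mul_le_of_le_one_left (by positivity) (sub_le_self _ (exp_pos _).le)

lemma sq_div_sq_le_quarter {r d : ℝ} (hr : 0 < r) (h : 2 * r ≤ d) : r ^ 2 / d ^ 2 ≤ 1 / 4 := by
  rw [div_le_div_iff₀ (by nlinarith) (by norm_num)]
  nlinarith

lemma maternIntensity_mul_clusterArea_le_quarter (lam : ℝ) {Rc δ : ℝ} (hRc : 0 < Rc)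
    (hδ : 2 * Rc ≤ δ) : maternIntensity lam δ * (π * Rc ^ 2) ≤ 1 / 4 :=
  calc maternIntensity lam δ * (π * Rc ^ 2)
      ≤ (π * δ ^ 2)⁻¹ * (π * Rc ^ 2) :=
        mul_le_mul_of_nonneg_right (maternIntensity_le_inv lam δ) (by positivity)
    _ = Rc ^ 2 / δ ^ 2 := by field_simp
    _ ≤ 1 / 4 := sq_div_sq_le_quarter hRc hδ

theorem matern_global_metric_le_quarter_general (lam Rc δ p : ℝ)
    (hlam : 0 < lam) (hRc : 0 < Rc) (hδ : 2 * Rc ≤ δ)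
    (hp1 : p ≤ 1) :
    ((1 - Real.exp (-(lam * π * δ ^ 2))) / (π * δ ^ 2)) * (π * Rc ^ 2) * p ≤ 1 / 4 :=
  calc maternIntensity lam δ * (π * Rc ^ 2) * p
      ≤ maternIntensity lam δ * (π * Rc ^ 2) :=
        mul_le_of_le_one_right (mul_nonneg (maternIntensity_nonneg hlam.le δ) (by positivity)) hp1
    _ ≤ 1 / 4 := maternIntensity_mul_clusterArea_le_quarter lam hRc hδ

/-- The global metric upper bound: for `λ > 0`, `R_c > 0`, `δ ≥ 2 R_c` and a match
probability `p ∈ [0,1]`, the density of a type II Matérn hard-core process of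
intensity `(1 - exp(-λπδ²))/(πδ²)` times the cluster area `πR_c²` times `p`
is at most `1/4`. -/
theorem matern_global_metric_le_quarter (lam Rc δ p : ℝ)
    (hlam : 0 < lam) (hRc : 0 < Rc) (hδ : 2 * Rc ≤ δ)
    (hp0 : 0 ≤ p) (hp1 : p ≤ 1) :
    ((1 - Real.exp (-(lam * π * δ ^ 2))) / (π * δ ^ 2)) * (π * Rc ^ 2) * p ≤ 1 / 4 :=
  matern_global_metric_le_quarter_general lam Rc δ p hlam hRc hδ hp1
end

section
/- Let X_1, …, X_n be i.i.d. nonnegative real random variables on a probability space, let β_1, …, β_n be nonnegative reals with Σ_{j=1}^n β_j = 1, and let s ≥ 0. Then E[exp(−s · Σ_{j=1}^n β_j X_j)] ≥ E[exp(−(s/n) · Σ_{j=1}^n X_j)]. -/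
open MeasureTheory ProbabilityTheory Real Finset

/-!
By independence and identical distribution, both sides are products of values of the common
moment generating function `M` of the `Xⱼ`: the left side is `∏ⱼ M (-s βⱼ)` and the right side is
`M (-s / n) ^ n`. Since `-s / n` is the mean of the points `-s βⱼ`, the inequality is the
log-convexity of `M`, i.e. Hölder's inequality.
-/

namespace ProbabilityTheory

variable {Ω ι : Type*} {m : MeasurableSpace Ω} {μ : Measure Ω} {X : Ω → ℝ}

lemma integrable_exp_mul_of_nonpos_of_nonneg [IsFiniteMeasure μ] (hX : AEMeasurable X μ)
    (hX0 : 0 ≤ᵐ[μ] X) {t : ℝ} (ht : t ≤ 0) : Integrable (fun ω ↦ exp (t * X ω)) μ := by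
  refine .of_bound (hX.const_mul t).exp.aestronglyMeasurable 1 ?_
  filter_upwards [hX0] with ω hω
  rw [norm_of_nonneg (exp_nonneg _), exp_le_one_iff]
  exact mul_nonpos_of_nonpos_of_nonneg ht hω

lemma mgf_eq_toReal_lintegral (hX : AEMeasurable X μ) (t : ℝ) :
    mgf X μ t = (∫⁻ ω, ENNReal.ofReal (exp (t * X ω)) ∂μ).toReal :=
  integral_eq_lintegral_of_nonneg_ae (ae_of_all _ fun _ ↦ exp_nonneg _)
    (hX.const_mul t).exp.aestronglyMeasurable

theorem mgf_sum_mul_le_prod_rpow (hX : AEMeasurable X μ) (s : Finset ι) {w t : ι → ℝ}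
    (hw0 : ∀ i ∈ s, 0 ≤ w i) (hw1 : ∑ i ∈ s, w i = 1)
    (hint : ∀ i ∈ s, Integrable (fun ω ↦ exp (t i * X ω)) μ) :
    mgf X μ (∑ i ∈ s, w i * t i) ≤ ∏ i ∈ s, mgf X μ (t i) ^ w i := by
  have hprod : ∀ ω, ∏ i ∈ s, ENNReal.ofReal (exp (t i * X ω)) ^ w i
      = ENNReal.ofReal (exp ((∑ i ∈ s, w i * t i) * X ω)) := fun ω ↦ by
    simp_rw [ENNReal.ofReal_rpow_of_pos (exp_pos _), ← exp_mul,
      ← ENNReal.ofReal_prod_of_nonneg fun _ _ ↦ (exp_pos _).le, ← exp_sum, sum_mul]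
    congr 2
    exact sum_congr rfl fun i _ ↦ by ring
  have hfin : ∏ i ∈ s, (∫⁻ ω, ENNReal.ofReal (exp (t i * X ω)) ∂μ) ^ w i ≠ ⊤ :=
    ENNReal.prod_ne_top fun i hi ↦
      ENNReal.rpow_ne_top_of_nonneg (hw0 i hi) (hint i hi).lintegral_lt_top.ne
  calc mgf X μ (∑ i ∈ s, w i * t i)
      = (∫⁻ ω, ∏ i ∈ s, ENNReal.ofReal (exp (t i * X ω)) ^ w i ∂μ).toReal := by
        simp_rw [hprod, mgf_eq_toReal_lintegral hX]
    _ ≤ (∏ i ∈ s, (∫⁻ ω, ENNReal.ofReal (exp (t i * X ω)) ∂μ) ^ w i).toReal :=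
        ENNReal.toReal_mono hfin <| ENNReal.lintegral_prod_norm_pow_le s
          (fun i _ ↦ ((hX.const_mul (t i)).exp.ennreal_ofReal)) hw1 hw0
    _ = ∏ i ∈ s, mgf X μ (t i) ^ w i := by
        simp_rw [ENNReal.toReal_prod, ← ENNReal.toReal_rpow, mgf_eq_toReal_lintegral hX]

lemma mgf_sum_const_mul_of_identDistrib {X : ι → Ω → ℝ} (h_indep : iIndepFun X μ)
    (hident : ∀ i j, IdentDistrib (X i) (X j) μ μ) (c : ι → ℝ) (s : Finset ι) (j : ι) (t : ℝ) :
    mgf (∑ i ∈ s, fun ω ↦ c i * X i ω) μ t = ∏ i ∈ s, mgf (X j) μ (c i * t) := by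
  change mgf (∑ i ∈ s, (fun x ↦ c i * x) ∘ X i) μ t = _
  rw [(h_indep.comp (fun i x ↦ c i * x) fun i ↦ measurable_const_mul (c i)).mgf_sum₀
    (fun i ↦ (hident i j).aemeasurable_fst.const_mul (c i))]
  exact prod_congr rfl fun i _ ↦ by
    rw [Function.comp_def, mgf_const_mul, mgf_congr_of_identDistrib _ _ (hident i j)]

end ProbabilityTheory

theorem laplace_weighted_ge_laplace_avg_general
    {Ω : Type*} [MeasurableSpace Ω] (μ : Measure Ω) [IsProbabilityMeasure μ]
    (n : ℕ) (hn : 0 < n) (X : Fin n → Ω → ℝ)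
    (hXnonneg : ∀ j ω, 0 ≤ X j ω)
    (hindep : iIndepFun X μ)
    (hident : ∀ i j, IdentDistrib (X i) (X j) μ μ)
    (β : Fin n → ℝ) (hβ0 : ∀ j, 0 ≤ β j) (hβ1 : ∑ j, β j = 1)
    (s : ℝ) (hs : 0 ≤ s) :
    ∫ ω, Real.exp (-(s * ∑ j, β j * X j ω)) ∂μ
      ≥ ∫ ω, Real.exp (-((s / n) * ∑ j, X j ω)) ∂μ := by
  set j₀ : Fin n := ⟨0, hn⟩
  have hweighted : ∫ ω, exp (-(s * ∑ j, β j * X j ω)) ∂μ = ∏ j, mgf (X j₀) μ (β j * -s) := by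
    rw [← mgf_sum_const_mul_of_identDistrib hindep hident β univ j₀]
    simp [mgf, Finset.sum_apply]
  have havg : ∫ ω, exp (-((s / n) * ∑ j, X j ω)) ∂μ = mgf (X j₀) μ (-(s / n)) ^ n := by
    have hsum : ∫ ω, exp (-((s / n) * ∑ j, X j ω)) ∂μ = mgf (∑ j, X j) μ (-(s / n)) := by
      simp [mgf, Finset.sum_apply]
    rw [hsum, mgf_sum_of_identDistrib₀ (fun j ↦ (hident j j).aemeasurable_fst) hindep
      (fun i _ j _ ↦ hident i j) (mem_univ j₀), card_univ, Fintype.card_fin]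
  have hholder : mgf (X j₀) μ (-(s / n)) ≤ ∏ j, mgf (X j₀) μ (β j * -s) ^ (n : ℝ)⁻¹ := by
    have hmean : ∑ j : Fin n, (n : ℝ)⁻¹ * (β j * -s) = -(s / n) := by
      rw [← mul_sum, ← sum_mul, hβ1]; ring
    rw [← hmean]
    refine mgf_sum_mul_le_prod_rpow (hident j₀ j₀).aemeasurable_fst univ
      (fun _ _ ↦ by positivity) (by simp [hn.ne']) fun j _ ↦ ?_
    exact integrable_exp_mul_of_nonpos_of_nonneg (hident j₀ j₀).aemeasurable_fst
      (ae_of_all _ (hXnonneg j₀)) (mul_nonpos_of_nonneg_of_nonpos (hβ0 j) (neg_nonpos.mpr hs))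
  rw [hweighted, havg, ge_iff_le]
  calc mgf (X j₀) μ (-(s / n)) ^ n ≤ (∏ j, mgf (X j₀) μ (β j * -s) ^ (n : ℝ)⁻¹) ^ n :=
        pow_le_pow_left₀ mgf_nonneg hholder n
    _ = ∏ j, mgf (X j₀) μ (β j * -s) := by
        rw [← prod_pow]
        exact prod_congr rfl fun j _ ↦ rpow_inv_natCast_pow mgf_nonneg hn.ne'

/-- Laplace-transform form of the second-order stochastic dominance comparison
(Lemma 4): for i.i.d. nonnegative random variables `X₁, …, Xₙ`, nonnegative weights
`β₁, …, βₙ` summing to one, and `s ≥ 0`,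
`E[exp (−s ∑ βⱼ Xⱼ)] ≥ E[exp (−(s/n) ∑ Xⱼ)]`. -/
theorem laplace_weighted_ge_laplace_avg
    {Ω : Type*} [MeasurableSpace Ω] (μ : Measure Ω) [IsProbabilityMeasure μ]
    (n : ℕ) (hn : 0 < n) (X : Fin n → Ω → ℝ)
    (hXmeas : ∀ j, Measurable (X j)) (hXnonneg : ∀ j ω, 0 ≤ X j ω)
    (hindep : iIndepFun X μ)
    (hident : ∀ i j, IdentDistrib (X i) (X j) μ μ)
    (β : Fin n → ℝ) (hβ0 : ∀ j, 0 ≤ β j) (hβ1 : ∑ j, β j = 1)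
    (s : ℝ) (hs : 0 ≤ s) :
    ∫ ω, Real.exp (-(s * ∑ j, β j * X j ω)) ∂μ
      ≥ ∫ ω, Real.exp (-((s / n) * ∑ j, X j ω)) ∂μ :=
  laplace_weighted_ge_laplace_avg_general μ n hn X hXnonneg hindep hident β hβ0 hβ1 s hs
end

section
/- Let X_1, …, X_n be i.i.d. nonnegative integrable real random variables on a probability space, let β_1, …, β_n be nonnegative reals with Σ_{j=1}^n β_j = 1, and let φ : ℝ → ℝ be a monotone increasing concave function such that φ((1/n)·Σ_{j=1}^n X_j) and φ(Σ_{j=1}^n β_j X_j) are both integrable. Then E[φ((1/n)·Σ_{j=1}^n X_j)] ≥ E[φ(Σ_{j=1}^n β_j X_j)]. -/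
open MeasureTheory ProbabilityTheory

/-!
Independence and identical distribution make the law of `(X₁, …, Xₙ)` a product of equal factors,
so it is invariant under permutations of the coordinates; in particular each cyclic shift
`∑ⱼ βⱼ X_{g+j}` of the weighted sum has the same law as `∑ⱼ βⱼ Xⱼ`. Averaging the `n` shifts
gives exactly `(1/n) ∑ⱼ Xⱼ`, so Jensen's inequality for the concave `φ`, integrated, yields the
claim.
-/

section Exchangeable

variable {Ω ι 𝓧 : Type*} [MeasurableSpace Ω] {μ : Measure Ω} [Fintype ι] [MeasurableSpace 𝓧]
  {X : ι → Ω → 𝓧}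

theorem ProbabilityTheory.iIndepFun.identDistrib_perm (hindep : iIndepFun X μ)
    (hX : ∀ i, Measurable (X i)) (hident : ∀ i j, IdentDistrib (X i) (X j) μ μ) (σ : ι ≃ ι) :
    IdentDistrib (fun ω j => X (σ j) ω) (fun ω j => X j ω) μ μ where
  aemeasurable_fst := (measurable_pi_lambda _ fun j => hX (σ j)).aemeasurable
  aemeasurable_snd := (measurable_pi_lambda _ hX).aemeasurable
  map_eq := by
    rw [(hindep.precomp σ.injective).map_fun_eq_pi_map fun j => (hX (σ j)).aemeasurable,
      hindep.map_fun_eq_pi_map fun j => (hX j).aemeasurable]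
    exact congrArg Measure.pi (funext fun j => (hident (σ j) j).map_eq)

end Exchangeable

section Shifts

variable {G : Type*} [AddGroup G] [Fintype G]

theorem sum_sum_mul_add_eq {R : Type*} [CommSemiring R] (β x : G → R) :
    ∑ g, ∑ j, β j * x (g + j) = (∑ j, β j) * ∑ j, x j := by
  rw [Finset.sum_comm, Finset.sum_mul]
  refine Fintype.sum_congr _ _ fun j => ?_
  rw [← Finset.mul_sum]
  exact congrArg _ (Equiv.sum_comp (Equiv.addRight j) x)

theorem ConcaveOn.average_map_weighted_shift_le [Nonempty G] {φ : ℝ → ℝ}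
    (hφ : ConcaveOn ℝ Set.univ φ) (β x : G → ℝ) (hβ : ∑ j, β j = 1) :
    ∑ g, (Fintype.card G : ℝ)⁻¹ * φ (∑ j, β j * x (g + j)) ≤
      φ ((Fintype.card G : ℝ)⁻¹ * ∑ j, x j) := by
  have hweights : ∑ _g : G, (Fintype.card G : ℝ)⁻¹ = 1 := by
    simp [Finset.card_univ]
  have hjensen := hφ.le_map_sum (t := Finset.univ) (fun _ _ => by positivity) hweights
    (p := fun g => ∑ j, β j * x (g + j)) fun _ _ => Set.mem_univ _
  simpa only [smul_eq_mul, ← Finset.mul_sum, sum_sum_mul_add_eq, hβ, one_mul] using hjensen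

end Shifts

theorem avg_ssd_weighted_sum_general
    {Ω : Type*} [MeasurableSpace Ω] (μ : Measure Ω) [IsProbabilityMeasure μ]
    (n : ℕ) (X : Fin n → Ω → ℝ)
    (hXmeas : ∀ j, Measurable (X j))
    (hindep : iIndepFun X μ)
    (hident : ∀ i j, IdentDistrib (X i) (X j) μ μ)
    (β : Fin n → ℝ) (hβ1 : ∑ j, β j = 1)
    (φ : ℝ → ℝ) (hφconc : ConcaveOn ℝ Set.univ φ)
    (hint₁ : Integrable (fun ω => φ ((1 / n) * ∑ j, X j ω)) μ)
    (hint₂ : Integrable (fun ω => φ (∑ j, β j * X j ω)) μ) :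
    ∫ ω, φ ((1 / n) * ∑ j, X j ω) ∂μ ≥ ∫ ω, φ (∑ j, β j * X j ω) ∂μ := by
  have : NeZero n := ⟨by rintro rfl; simp at hβ1⟩
  have hφ : Measurable φ := (continuousOn_univ.mp (hφconc.continuousOn isOpen_univ)).measurable
  have hweighted : Measurable fun y : Fin n → ℝ => φ (∑ j, β j * y j) := hφ.comp (by fun_prop)
  have hshift (g : Fin n) :
      IdentDistrib (fun ω => φ (∑ j, β j * X (g + j) ω)) (fun ω => φ (∑ j, β j * X j ω)) μ μ :=
    (hindep.identDistrib_perm hXmeas hident (Equiv.addLeft g)).comp hweighted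
  have hint (g : Fin n) : Integrable (fun ω => (n : ℝ)⁻¹ * φ (∑ j, β j * X (g + j) ω)) μ :=
    ((hshift g).integrable_iff.mpr hint₂).const_mul _
  calc ∫ ω, φ (∑ j, β j * X j ω) ∂μ
      = ∑ g : Fin n, ∫ ω, (n : ℝ)⁻¹ * φ (∑ j, β j * X (g + j) ω) ∂μ := by
        simp only [integral_const_mul, (hshift _).integral_eq, Finset.sum_const,
          Finset.card_univ, Fintype.card_fin, nsmul_eq_mul]
        exact (mul_inv_cancel_left₀ (Nat.cast_ne_zero.mpr (NeZero.ne n)) _).symm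
    _ = ∫ ω, ∑ g : Fin n, (n : ℝ)⁻¹ * φ (∑ j, β j * X (g + j) ω) ∂μ :=
        (integral_finsetSum _ fun g _ => hint g).symm
    _ ≤ ∫ ω, φ ((1 / n) * ∑ j, X j ω) ∂μ := by
        refine integral_mono (integrable_finsetSum _ fun g _ => hint g) hint₁ fun ω => ?_
        simpa [one_div] using
          hφconc.average_map_weighted_shift_le β (fun j => X j ω) hβ1

/-- Second-order stochastic dominance of the equally weighted average over any
convex combination of i.i.d. nonnegative integrable random variables: for every
monotone increasing concave `φ` (with both compositions integrable),
`E[φ((1/n) ∑ Xⱼ)] ≥ E[φ(∑ βⱼ Xⱼ)]`. -/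
theorem avg_ssd_weighted_sum
    {Ω : Type*} [MeasurableSpace Ω] (μ : Measure Ω) [IsProbabilityMeasure μ]
    (n : ℕ) (hn : 0 < n) (X : Fin n → Ω → ℝ)
    (hXmeas : ∀ j, Measurable (X j)) (hXnonneg : ∀ j ω, 0 ≤ X j ω)
    (hXint : ∀ j, Integrable (X j) μ)
    (hindep : iIndepFun X μ)
    (hident : ∀ i j, IdentDistrib (X i) (X j) μ μ)
    (β : Fin n → ℝ) (hβ0 : ∀ j, 0 ≤ β j) (hβ1 : ∑ j, β j = 1)
    (φ : ℝ → ℝ) (hφmono : Monotone φ) (hφconc : ConcaveOn ℝ Set.univ φ)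
    (hint₁ : Integrable (fun ω => φ ((1 / n) * ∑ j, X j ω)) μ)
    (hint₂ : Integrable (fun ω => φ (∑ j, β j * X j ω)) μ) :
    ∫ ω, φ ((1 / n) * ∑ j, X j ω) ∂μ ≥ ∫ ω, φ (∑ j, β j * X j ω) ∂μ :=
  avg_ssd_weighted_sum_general μ n X hXmeas hindep hident β hβ1 φ hφconc hint₁ hint₂
end

section
/- Let X_1, …, X_n be mutually independent nonnegative real random variables and Y_1, …, Y_n be mutually independent nonnegative real random variables, all on the same probability space. Suppose that for every i ∈ {1,…,n} and every bounded continuous monotone increasing concave function φ : ℝ → ℝ one has E[φ(X_i)] ≥ E[φ(Y_i)]. Then for all nonnegative reals β_1, …, β_n and every bounded continuous monotone increasing concave function φ : ℝ → ℝ, E[φ(Σ_{i=1}^n β_i X_i)] ≥ E[φ(Σ_{i=1}^n β_i Y_i)]. -/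
open MeasureTheory ProbabilityTheory

/-!
Pass to laws on `ℝ`: for independent `S, T` the law of `S + T` is the convolution of their laws,
and `∫ φ d(ν₁ ∗ ν₂) = ∫ (∫ φ (x + y) dν₂(y)) dν₁(x)`. Both `y ↦ φ (x + y)` and the average
`x ↦ ∫ φ (x + y) dν₂(y)` are again bounded continuous increasing concave, so dominance can be
applied first in the inner and then in the outer variable. Hence second-order dominance is
preserved by convolution and, trivially, by scaling with `c ≥ 0`; induction on the number of
summands finishes the proof.
-/

def IsSSDTest (φ : ℝ → ℝ) : Prop :=
  Continuous φ ∧ Monotone φ ∧ ConcaveOn ℝ Set.univ φ ∧ ∃ C, ∀ x, |φ x| ≤ C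

/-- `ν` dominates `ν'` in second-order stochastic dominance. -/
def SSDominates (ν ν' : Measure ℝ) : Prop :=
  ∀ φ, IsSSDTest φ → ∫ x, φ x ∂ν' ≤ ∫ x, φ x ∂ν

namespace IsSSDTest

variable {φ : ℝ → ℝ}

lemma integrable (hφ : IsSSDTest φ) (ν : Measure ℝ) [IsFiniteMeasure ν] : Integrable φ ν := by
  obtain ⟨hc, -, -, C, hC⟩ := hφ
  exact Integrable.of_bound hc.aestronglyMeasurable C (ae_of_all _ hC)

lemma comp_add_left (hφ : IsSSDTest φ) (s : ℝ) : IsSSDTest (fun x => φ (s + x)) := by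
  obtain ⟨hc, hm, hcc, C, hC⟩ := hφ
  exact ⟨by fun_prop, fun x y hxy => hm (by linarith), hcc.translate_right s,
    C, fun x => hC (s + x)⟩

lemma comp_mul_left (hφ : IsSSDTest φ) {c : ℝ} (hc : 0 ≤ c) : IsSSDTest (fun x => φ (c * x)) := by
  obtain ⟨hcont, hm, hcc, C, hC⟩ := hφ
  exact ⟨by fun_prop, fun x y hxy => hm (mul_le_mul_of_nonneg_left hxy hc),
    hcc.comp_linearMap (LinearMap.mul ℝ ℝ c), C, fun x => hC (c * x)⟩

lemma integral_comp_add (hφ : IsSSDTest φ) (ν : Measure ℝ) [IsFiniteMeasure ν] :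
    IsSSDTest (fun s => ∫ y, φ (s + y) ∂ν) := by
  have hint : ∀ s, Integrable (fun y => φ (s + y)) ν := fun s =>
    (hφ.comp_add_left s).integrable ν
  obtain ⟨hc, hm, hcc, C, hC⟩ := hφ
  refine ⟨?_, ?_, ?_, C * ν.real Set.univ, fun s => ?_⟩
  · exact continuous_of_dominated (fun s => (hint s).aestronglyMeasurable)
      (fun s => ae_of_all _ fun y => hC (s + y)) (integrable_const C)
      (ae_of_all _ fun y => by fun_prop)
  · exact monotoneOn_univ.mp <| integral_monotoneOn_of_integrand_ae
      (ae_of_all _ fun y => fun a _ b _ hab => hm (by linarith)) fun s _ => hint s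
  · exact integral_concaveOn_of_integrand_ae convex_univ
      (ae_of_all _ fun y => hcc.translate_left y) fun s _ => hint s
  · simpa using norm_integral_le_of_norm_le_const
      (ae_of_all ν fun y => (Real.norm_eq_abs _).trans_le (hC (s + y)))

end IsSSDTest

namespace SSDominates

lemma refl (ν : Measure ℝ) : SSDominates ν ν := fun _ _ => le_rfl

lemma map_const_mul {ν ν' : Measure ℝ} (h : SSDominates ν ν') {c : ℝ} (hc : 0 ≤ c) :
    SSDominates (ν.map (c * ·)) (ν'.map (c * ·)) := by
  intro φ hφ
  have hm : Measurable (c * · : ℝ → ℝ) := measurable_const_mul c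
  rw [integral_map hm.aemeasurable hφ.1.aestronglyMeasurable,
    integral_map hm.aemeasurable hφ.1.aestronglyMeasurable]
  exact h _ (hφ.comp_mul_left hc)

lemma conv {ν₁ ν₁' ν₂ ν₂' : Measure ℝ} [IsFiniteMeasure ν₁] [IsFiniteMeasure ν₁']
    [IsFiniteMeasure ν₂] [IsFiniteMeasure ν₂'] (h₁ : SSDominates ν₁ ν₁')
    (h₂ : SSDominates ν₂ ν₂') : SSDominates (ν₁ ∗ ν₂) (ν₁' ∗ ν₂') := by
  intro φ hφ
  rw [integral_conv (hφ.integrable _), integral_conv (hφ.integrable _)]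
  calc ∫ x, ∫ y, φ (x + y) ∂ν₂' ∂ν₁'
      ≤ ∫ x, ∫ y, φ (x + y) ∂ν₂ ∂ν₁' :=
        integral_mono ((hφ.integral_comp_add ν₂').integrable ν₁')
          ((hφ.integral_comp_add ν₂).integrable ν₁') fun x => h₂ _ (hφ.comp_add_left x)
    _ ≤ ∫ x, ∫ y, φ (x + y) ∂ν₂ ∂ν₁ := h₁ _ (hφ.integral_comp_add ν₂)

end SSDominates

section RandomVariables

variable {Ω : Type*} [MeasurableSpace Ω] {μ : Measure Ω}

lemma ssDominates_map_iff {X Y : Ω → ℝ} (hX : Measurable X) (hY : Measurable Y) :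
    SSDominates (μ.map X) (μ.map Y) ↔
      ∀ φ, IsSSDTest φ → ∫ ω, φ (Y ω) ∂μ ≤ ∫ ω, φ (X ω) ∂μ := by
  refine forall₂_congr fun φ hφ => ?_
  rw [integral_map hX.aemeasurable hφ.1.aestronglyMeasurable,
    integral_map hY.aemeasurable hφ.1.aestronglyMeasurable]

lemma ssDominates_map_finset_sum [IsFiniteMeasure μ] {ι : Type*} {f g : ι → Ω → ℝ}
    (hf : ∀ i, Measurable (f i)) (hg : ∀ i, Measurable (g i))
    (hf_indep : iIndepFun f μ) (hg_indep : iIndepFun g μ) (s : Finset ι)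
    (hfg : ∀ i ∈ s, SSDominates (μ.map (f i)) (μ.map (g i))) :
    SSDominates (μ.map (∑ i ∈ s, f i)) (μ.map (∑ i ∈ s, g i)) := by
  classical
  induction s using Finset.induction_on with
  | empty => exact SSDominates.refl _
  | @insert a s ha ih =>
    have law : ∀ h : ι → Ω → ℝ, (∀ i, Measurable (h i)) → iIndepFun h μ →
        μ.map (∑ i ∈ insert a s, h i) = μ.map (h a) ∗ μ.map (∑ i ∈ s, h i) := fun h hh hi => by
      rw [Finset.sum_insert ha]
      exact (hi.indepFun_finsetSum_of_notMem hh ha).symm.map_add_eq_map_conv_map (hh a)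
        (by fun_prop)
    rw [law f hf hf_indep, law g hg hg_indep]
    exact (hfg a (Finset.mem_insert_self a s)).conv
      (ih fun i hi => hfg i (Finset.mem_insert_of_mem hi))

end RandomVariables

theorem ssd_preserved_under_nonneg_combination_general
    {Ω : Type*} [MeasurableSpace Ω] (μ : Measure Ω) [IsProbabilityMeasure μ]
    (n : ℕ) (X Y : Fin n → Ω → ℝ)
    (hXmeas : ∀ i, Measurable (X i)) (hYmeas : ∀ i, Measurable (Y i))
    (hXindep : iIndepFun X μ)
    (hYindep : iIndepFun Y μ)
    (hdom : ∀ i, ∀ φ : ℝ → ℝ, Continuous φ → Monotone φ → ConcaveOn ℝ Set.univ φ →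
      (∃ C, ∀ x, |φ x| ≤ C) → ∫ ω, φ (X i ω) ∂μ ≥ ∫ ω, φ (Y i ω) ∂μ)
    (β : Fin n → ℝ) (hβ : ∀ i, 0 ≤ β i)
    (φ : ℝ → ℝ) (hφc : Continuous φ) (hφmono : Monotone φ)
    (hφconc : ConcaveOn ℝ Set.univ φ) (hφbdd : ∃ C, ∀ x, |φ x| ≤ C) :
    ∫ ω, φ (∑ i, β i * X i ω) ∂μ ≥ ∫ ω, φ (∑ i, β i * Y i ω) ∂μ := by
  set f : Fin n → Ω → ℝ := fun i ω => β i * X i ω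
  set g : Fin n → Ω → ℝ := fun i ω => β i * Y i ω
  have hf : ∀ i, Measurable (f i) := fun i => (hXmeas i).const_mul (β i)
  have hg : ∀ i, Measurable (g i) := fun i => (hYmeas i).const_mul (β i)
  have hfg : ∀ i ∈ Finset.univ, SSDominates (μ.map (f i)) (μ.map (g i)) := fun i _ => by
    have hXY : SSDominates (μ.map (X i)) (μ.map (Y i)) :=
      (ssDominates_map_iff (hXmeas i) (hYmeas i)).2 fun ψ ⟨hc, hm, hcc, hb⟩ =>
        hdom i ψ hc hm hcc hb
    change SSDominates (μ.map ((β i * ·) ∘ X i)) (μ.map ((β i * ·) ∘ Y i))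
    rw [← Measure.map_map (measurable_const_mul _) (hXmeas i),
      ← Measure.map_map (measurable_const_mul _) (hYmeas i)]
    exact hXY.map_const_mul (hβ i)
  have hsum := ssDominates_map_finset_sum hf hg
    (hXindep.comp _ fun i => measurable_const_mul (β i))
    (hYindep.comp _ fun i => measurable_const_mul (β i)) Finset.univ hfg
  simpa [f, g, Finset.sum_apply] using
    (ssDominates_map_iff (by fun_prop) (by fun_prop)).1 hsum φ ⟨hφc, hφmono, hφconc, hφbdd⟩

/-- Preservation of second-order stochastic dominance under nonnegative linear
combinations of independent random variables: if `X₁, …, Xₙ` are mutually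
independent nonnegative, `Y₁, …, Yₙ` are mutually independent nonnegative, and
`Xᵢ` second-order stochastically dominates `Yᵢ` for each `i` (tested against
bounded continuous monotone increasing concave functions), then `∑ βᵢ Xᵢ`
second-order stochastically dominates `∑ βᵢ Yᵢ` for all nonnegative weights `βᵢ`. -/
theorem ssd_preserved_under_nonneg_combination
    {Ω : Type*} [MeasurableSpace Ω] (μ : Measure Ω) [IsProbabilityMeasure μ]
    (n : ℕ) (X Y : Fin n → Ω → ℝ)
    (hXmeas : ∀ i, Measurable (X i)) (hYmeas : ∀ i, Measurable (Y i))
    (hXnonneg : ∀ i ω, 0 ≤ X i ω) (hYnonneg : ∀ i ω, 0 ≤ Y i ω)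
    (hXindep : iIndepFun X μ)
    (hYindep : iIndepFun Y μ)
    (hdom : ∀ i, ∀ φ : ℝ → ℝ, Continuous φ → Monotone φ → ConcaveOn ℝ Set.univ φ →
      (∃ C, ∀ x, |φ x| ≤ C) → ∫ ω, φ (X i ω) ∂μ ≥ ∫ ω, φ (Y i ω) ∂μ)
    (β : Fin n → ℝ) (hβ : ∀ i, 0 ≤ β i)
    (φ : ℝ → ℝ) (hφc : Continuous φ) (hφmono : Monotone φ)
    (hφconc : ConcaveOn ℝ Set.univ φ) (hφbdd : ∃ C, ∀ x, |φ x| ≤ C) :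
    ∫ ω, φ (∑ i, β i * X i ω) ∂μ ≥ ∫ ω, φ (∑ i, β i * Y i ω) ∂μ :=
  ssd_preserved_under_nonneg_combination_general μ n X Y hXmeas hYmeas hXindep hYindep hdom β hβ φ
    hφc hφmono hφconc hφbdd
end

section
/- Let X_1, …, X_n be i.i.d. nonnegative real random variables on a probability space, let B_1, …, B_n be nonnegative integers with Σ_{j=1}^n B_j = n, and let s ≥ 0. Then E[exp(−(s/n) · Σ_{j=1}^n B_j X_j)] ≥ E[exp(−(s/n) · Σ_{j=1}^n X_j)]. -/
/-!
Writing `t = -s/n`, independence factors both sides into products of moment generating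
functions: `∏ⱼ M(t Bⱼ)` and `∏ⱼ M(t)`, where `M` is the common mgf of the `Xⱼ`. Jensen's
inequality for the convex map `x ↦ x ^ k` on `[0, ∞)`, applied to `exp (t Xⱼ)`, gives
`M(t) ^ k ≤ M(k t)`, and `∏ⱼ M(t) ^ Bⱼ = M(t) ^ n` because `∑ Bⱼ = n`.
-/

open MeasureTheory ProbabilityTheory Real Finset

theorem Fintype.prod_pow_eq_prod_of_sum_eq_card {ι M : Type*} [Fintype ι] [CommMonoid M]
    {f : ι → M} (hf : ∀ i j, f i = f j) {B : ι → ℕ} (hB : ∑ i, B i = Fintype.card ι) :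
    ∏ i, f i ^ B i = ∏ i, f i := by
  cases isEmpty_or_nonempty ι with
  | inl _ => simp
  | inr h =>
    obtain ⟨i₀⟩ := h
    simp_rw [hf _ i₀]
    rw [prod_pow_eq_pow_sum, hB, prod_const, card_univ]

namespace ProbabilityTheory

variable {Ω : Type*} [MeasurableSpace Ω] {μ : Measure Ω}

lemma integrable_exp_mul_of_nonneg_of_nonpos [IsFiniteMeasure μ] {X : Ω → ℝ} {t : ℝ}
    (hX : AEMeasurable X μ) (hX₀ : ∀ᵐ ω ∂μ, 0 ≤ X ω) (ht : t ≤ 0) :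
    Integrable (fun ω ↦ exp (t * X ω)) μ := by
  refine .of_mem_Icc 0 1 (measurable_exp.comp_aemeasurable (hX.const_mul t)) ?_
  filter_upwards [hX₀] with ω hω
  exact ⟨(exp_pos _).le, exp_le_one_iff.mpr (mul_nonpos_of_nonpos_of_nonneg ht hω)⟩

lemma mgf_pow_le_mgf_nat_mul [IsProbabilityMeasure μ] {X : Ω → ℝ} {t : ℝ} (k : ℕ)
    (ht : Integrable (fun ω ↦ exp (t * X ω)) μ)
    (hkt : Integrable (fun ω ↦ exp ((k * t) * X ω)) μ) :
    mgf X μ t ^ k ≤ mgf X μ (k * t) := by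
  have hpow : (fun ω ↦ exp ((k * t) * X ω)) = fun ω ↦ exp (t * X ω) ^ k := by
    ext ω
    rw [mul_assoc, exp_nat_mul]
  rw [hpow] at hkt
  simp only [mgf, hpow]
  exact (convexOn_pow k).map_integral_le (continuous_pow k).continuousOn isClosed_Ici
    (.of_forall fun ω ↦ (exp_pos _).le) ht hkt

lemma iIndepFun.integral_exp_mul_sum_mul {ι : Type*} [Fintype ι] {X : ι → Ω → ℝ}
    (h : iIndepFun X μ) (hX : ∀ i, Measurable (X i)) (c : ι → ℝ) (t : ℝ) :
    ∫ ω, exp (t * ∑ i, c i * X i ω) ∂μ = ∏ i, mgf (X i) μ (t * c i) := by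
  have h_sum := (h.comp (fun i x ↦ c i * x) fun i ↦ measurable_const_mul (c i)).mgf_sum
    (t := t) (fun i ↦ (hX i).const_mul (c i)) univ
  simp only [mgf, Finset.sum_apply, Function.comp_def] at h_sum
  rw [h_sum]
  refine prod_congr rfl fun i _ ↦ integral_congr_ae (.of_forall fun ω ↦ ?_)
  simp only [mul_assoc]

end ProbabilityTheory

theorem laplace_integer_weights_ge_general
    {Ω : Type*} [MeasurableSpace Ω] (μ : Measure Ω) [IsProbabilityMeasure μ]
    (n : ℕ) (X : Fin n → Ω → ℝ)
    (hXmeas : ∀ j, Measurable (X j)) (hXnonneg : ∀ j ω, 0 ≤ X j ω)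
    (hindep : iIndepFun X μ)
    (hident : ∀ i j, IdentDistrib (X i) (X j) μ μ)
    (B : Fin n → ℕ) (hB : ∑ j, B j = n)
    (s : ℝ) (hs : 0 ≤ s) :
    ∫ ω, Real.exp (-((s / n) * ∑ j, (B j : ℝ) * X j ω)) ∂μ
      ≥ ∫ ω, Real.exp (-((s / n) * ∑ j, X j ω)) ∂μ := by
  set t : ℝ := -(s / n)
  have ht : t ≤ 0 := neg_nonpos.mpr (by positivity)
  have hint (j : Fin n) {u : ℝ} (hu : u ≤ 0) : Integrable (fun ω ↦ exp (u * X j ω)) μ :=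
    integrable_exp_mul_of_nonneg_of_nonpos (hXmeas j).aemeasurable
      (.of_forall (hXnonneg j)) hu
  have hjensen (j : Fin n) : mgf (X j) μ t ^ B j ≤ mgf (X j) μ (t * B j) := by
    rw [mul_comm]
    exact mgf_pow_le_mgf_nat_mul _ (hint j ht)
      (hint j (mul_nonpos_of_nonneg_of_nonpos (Nat.cast_nonneg _) ht))
  calc ∫ ω, exp (-((s / n) * ∑ j, X j ω)) ∂μ
      = ∏ j, mgf (X j) μ (t * 1) := by
        simpa [t] using hindep.integral_exp_mul_sum_mul hXmeas 1 t
    _ = ∏ j, mgf (X j) μ t ^ B j := by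
        rw [mul_one, Fintype.prod_pow_eq_prod_of_sum_eq_card
          (fun i j ↦ mgf_congr_of_identDistrib _ _ (hident i j) t) (by simpa using hB)]
    _ ≤ ∏ j, mgf (X j) μ (t * B j) :=
        prod_le_prod (fun j _ ↦ pow_nonneg mgf_nonneg _) fun j _ ↦ hjensen j
    _ = ∫ ω, exp (-((s / n) * ∑ j, (B j : ℝ) * X j ω)) ∂μ := by
        rw [← hindep.integral_exp_mul_sum_mul hXmeas]
        simp [t]

/-- Single-cluster content of Lemma 4: for i.i.d. nonnegative random variables
`X₁, …, Xₙ`, nonnegative integers `B₁, …, Bₙ` with `∑ Bⱼ = n`, and `s ≥ 0`,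
`E[exp (−(s/n) ∑ Bⱼ Xⱼ)] ≥ E[exp (−(s/n) ∑ Xⱼ)]`. -/
theorem laplace_integer_weights_ge
    {Ω : Type*} [MeasurableSpace Ω] (μ : Measure Ω) [IsProbabilityMeasure μ]
    (n : ℕ) (hn : 0 < n) (X : Fin n → Ω → ℝ)
    (hXmeas : ∀ j, Measurable (X j)) (hXnonneg : ∀ j ω, 0 ≤ X j ω)
    (hindep : iIndepFun X μ)
    (hident : ∀ i j, IdentDistrib (X i) (X j) μ μ)
    (B : Fin n → ℕ) (hB : ∑ j, B j = n)
    (s : ℝ) (hs : 0 ≤ s) :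
    ∫ ω, Real.exp (-((s / n) * ∑ j, (B j : ℝ) * X j ω)) ∂μ
      ≥ ∫ ω, Real.exp (-((s / n) * ∑ j, X j ω)) ∂μ :=
  laplace_integer_weights_ge_general μ n X hXmeas hXnonneg hindep hident B hB s hs
end
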